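/- The matrices 𝔻_n and 𝔻̃_n are negative semidefinite; in fact 𝔻_n is negative definite, while 𝔻̃_n is negative definite as well (all eigenvalues lie in [−4, 0), with −4 < λ < 0 for 𝔻_n). Consequently, for 0 < γ ≤ 1, the diffusion discretisation matrix γ𝔻 − (γ²/12)𝔻² + (γ³/90)𝔻³ is negative definite. -/

import Mathlib

open Matrix
/-- The Dirichlet second-difference matrix: −2 on the diagonal, 1 on the off-diagonals. -/
def Dmat (n : ℕ) : Matrix (Fin n) (Fin n) ℝ :=
  fun i j => if i = j then -2 else if |((i : ℕ) : ℤ) - ((j : ℕ) : ℤ)| = 1 then 1 else 0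

/-- The Neumann/mid-point second-difference matrix: diagonal `(−1, −2, …, −2)`,
1 on the off-diagonals. -/
def Dtilde (n : ℕ) : Matrix (Fin n) (Fin n) ℝ :=
  fun i j => if i = j then (if (i : ℕ) = 0 then -1 else -2)
    else if |((i : ℕ) : ℤ) - ((j : ℕ) : ℤ)| = 1 then 1 else 0


def Amat (n : ℕ) : Matrix (Fin (n+1)) (Fin n) ℝ :=
  fun k i => (if k = i.castSucc then 1 else 0) - (if k = i.succ then 1 else 0)

def Bmat (n : ℕ) : Matrix (Fin (n+1)) (Fin n) ℝ :=
  fun k i => (if k = i.castSucc then 1 else 0) + (if k = i.succ then 1 else 0)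

lemma delta_sum {m : ℕ} (a b : Fin m) :
    ∑ k, (if k = a then (1:ℝ) else 0) * (if k = b then 1 else 0) = if a = b then 1 else 0 := by
  rw [Finset.sum_eq_single a]
  · simp
  · intro k _ hk; simp [hk]
  · intro h; exact absurd (Finset.mem_univ a) h

lemma AtA (n : ℕ) : (Amat n)ᵀ * Amat n = -Dmat n := by
  ext i j
  simp only [Matrix.mul_apply, transpose_apply, Amat, Matrix.neg_apply, Dmat]
  have : ∀ k : Fin (n+1),
      ((if k = i.castSucc then (1:ℝ) else 0) - (if k = i.succ then 1 else 0)) *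
      ((if k = j.castSucc then (1:ℝ) else 0) - (if k = j.succ then 1 else 0)) =
      (if k = i.castSucc then (1:ℝ) else 0) * (if k = j.castSucc then 1 else 0)
      - (if k = i.castSucc then (1:ℝ) else 0) * (if k = j.succ then 1 else 0)
      - ((if k = i.succ then (1:ℝ) else 0) * (if k = j.castSucc then 1 else 0)
      - (if k = i.succ then (1:ℝ) else 0) * (if k = j.succ then 1 else 0)) := by
    intro k; ring
  rw [Finset.sum_congr rfl (fun k _ => this k), Finset.sum_sub_distrib, Finset.sum_sub_distrib,
    Finset.sum_sub_distrib, delta_sum, delta_sum, delta_sum, delta_sum]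
  simp only [Fin.ext_iff, Fin.coe_castSucc, Fin.val_succ, abs_eq (by norm_num : (0:ℤ) ≤ 1)]
  split_ifs <;> first | (exfalso; omega) | norm_num

lemma BtB (n : ℕ) : (Bmat n)ᵀ * Bmat n = Dmat n + (4:ℝ) • 1 := by
  ext i j
  simp only [Matrix.mul_apply, transpose_apply, Bmat, Matrix.add_apply, Dmat, Matrix.smul_apply,
    Matrix.one_apply, smul_eq_mul]
  have : ∀ k : Fin (n+1),
      ((if k = i.castSucc then (1:ℝ) else 0) + (if k = i.succ then 1 else 0)) *
      ((if k = j.castSucc then (1:ℝ) else 0) + (if k = j.succ then 1 else 0)) =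
      (if k = i.castSucc then (1:ℝ) else 0) * (if k = j.castSucc then 1 else 0)
      + (if k = i.castSucc then (1:ℝ) else 0) * (if k = j.succ then 1 else 0)
      + ((if k = i.succ then (1:ℝ) else 0) * (if k = j.castSucc then 1 else 0)
      + (if k = i.succ then (1:ℝ) else 0) * (if k = j.succ then 1 else 0)) := by
    intro k; ring
  rw [Finset.sum_congr rfl (fun k _ => this k), Finset.sum_add_distrib, Finset.sum_add_distrib,
    Finset.sum_add_distrib, delta_sum, delta_sum, delta_sum, delta_sum]
  simp only [Fin.ext_iff, Fin.coe_castSucc, Fin.val_succ, abs_eq (by norm_num : (0:ℤ) ≤ 1)]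
  split_ifs <;> first | (exfalso; omega) | norm_num

lemma Amat_mulVec (n : ℕ) (x : Fin n → ℝ) (k : Fin (n+1)) :
    (Amat n).mulVec x k =
      (if h : (k:ℕ) < n then x ⟨k, h⟩ else 0) -
      (if h : 0 < (k:ℕ) then x ⟨(k:ℕ)-1, by omega⟩ else 0) := by
  simp only [mulVec, dotProduct, Amat, sub_mul, ite_mul, one_mul, zero_mul,
    Finset.sum_sub_distrib]
  congr 1
  · split
    · rename_i h
      rw [Finset.sum_eq_single (⟨(k:ℕ), h⟩ : Fin n)]
      · rw [if_pos (by simp [Fin.ext_iff])]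
      · intro i _ hi; rw [if_neg]; intro hc
        exact hi (by simp [Fin.ext_iff] at hc ⊢; omega)
      · intro h'; exact absurd (Finset.mem_univ _) h'
    · rename_i h
      apply Finset.sum_eq_zero; intro i _
      rw [if_neg]; intro hc
      simp [Fin.ext_iff] at hc; omega
  · split
    · rename_i h
      rw [Finset.sum_eq_single (⟨(k:ℕ)-1, by omega⟩ : Fin n)]
      · rw [if_pos (by simp [Fin.ext_iff]; omega)]
      · intro i _ hi; rw [if_neg]; intro hc
        exact hi (by simp [Fin.ext_iff] at hc ⊢; omega)
      · intro h'; exact absurd (Finset.mem_univ _) h'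
    · rename_i h
      apply Finset.sum_eq_zero; intro i _
      rw [if_neg]; intro hc
      simp [Fin.ext_iff] at hc; omega

lemma Bmat_mulVec (n : ℕ) (x : Fin n → ℝ) (k : Fin (n+1)) :
    (Bmat n).mulVec x k =
      (if h : (k:ℕ) < n then x ⟨k, h⟩ else 0) +
      (if h : 0 < (k:ℕ) then x ⟨(k:ℕ)-1, by omega⟩ else 0) := by
  simp only [mulVec, dotProduct, Bmat, add_mul, ite_mul, one_mul, zero_mul,
    Finset.sum_add_distrib]
  congr 1
  · split
    · rename_i h
      rw [Finset.sum_eq_single (⟨(k:ℕ), h⟩ : Fin n)]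
      · rw [if_pos (by simp [Fin.ext_iff])]
      · intro i _ hi; rw [if_neg]; intro hc
        exact hi (by simp [Fin.ext_iff] at hc ⊢; omega)
      · intro h'; exact absurd (Finset.mem_univ _) h'
    · rename_i h
      apply Finset.sum_eq_zero; intro i _
      rw [if_neg]; intro hc
      simp [Fin.ext_iff] at hc; omega
  · split
    · rename_i h
      rw [Finset.sum_eq_single (⟨(k:ℕ)-1, by omega⟩ : Fin n)]
      · rw [if_pos (by simp [Fin.ext_iff]; omega)]
      · intro i _ hi; rw [if_neg]; intro hc
        exact hi (by simp [Fin.ext_iff] at hc ⊢; omega)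
      · intro h'; exact absurd (Finset.mem_univ _) h'
    · rename_i h
      apply Finset.sum_eq_zero; intro i _
      rw [if_neg]; intro hc
      simp [Fin.ext_iff] at hc; omega

lemma quad_Dmat (n : ℕ) (x : Fin n → ℝ) :
    x ⬝ᵥ (Dmat n).mulVec x = -((Amat n).mulVec x ⬝ᵥ (Amat n).mulVec x) := by
  have hD : Dmat n = -((Amat n)ᵀ * Amat n) := by rw [AtA, neg_neg]
  rw [hD, Matrix.neg_mulVec, dotProduct_neg, ← Matrix.mulVec_mulVec,
    Matrix.dotProduct_mulVec, Matrix.vecMul_transpose]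

lemma quad_Dmat4 (n : ℕ) (x : Fin n → ℝ) :
    x ⬝ᵥ (Dmat n).mulVec x + 4 * (x ⬝ᵥ x) = (Bmat n).mulVec x ⬝ᵥ (Bmat n).mulVec x := by
  have hB : x ⬝ᵥ ((Dmat n + (4:ℝ) • 1).mulVec x) = (Bmat n).mulVec x ⬝ᵥ (Bmat n).mulVec x := by
    rw [← BtB, ← Matrix.mulVec_mulVec, Matrix.dotProduct_mulVec, Matrix.vecMul_transpose]
  rw [Matrix.add_mulVec, dotProduct_add] at hB
  rw [← hB]
  congr 1
  rw [Matrix.smul_mulVec, Matrix.one_mulVec, dotProduct_smul, smul_eq_mul]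

lemma Amat_inj (n : ℕ) (x : Fin n → ℝ) (h : (Amat n).mulVec x = 0) : x = 0 := by
  have key : ∀ m : ℕ, ∀ hm : m < n, x ⟨m, hm⟩ = 0 := by
    intro m
    induction m with
    | zero =>
      intro hm
      have h0 := congrFun h ⟨0, by omega⟩
      rw [Amat_mulVec] at h0
      simp only [Pi.zero_apply] at h0
      rw [dif_pos (by simpa using hm), dif_neg (by simp)] at h0
      simpa using h0
    | succ m ih =>
      intro hm
      have h0 := congrFun h ⟨m+1, by omega⟩
      rw [Amat_mulVec] at h0
      simp only [Pi.zero_apply] at h0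
      rw [dif_pos (by simpa using hm), dif_pos (by simp)] at h0
      have := ih (by omega)
      simp only [Nat.add_sub_cancel] at h0
      rw [sub_eq_zero] at h0
      rw [h0]
      convert this using 2
  funext i
  have := key i.val i.isLt
  simpa using this

lemma Bmat_inj (n : ℕ) (x : Fin n → ℝ) (h : (Bmat n).mulVec x = 0) : x = 0 := by
  have key : ∀ m : ℕ, ∀ hm : m < n, x ⟨m, hm⟩ = 0 := by
    intro m
    induction m with
    | zero =>
      intro hm
      have h0 := congrFun h ⟨0, by omega⟩
      rw [Bmat_mulVec] at h0
      simp only [Pi.zero_apply] at h0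
      rw [dif_pos (by simpa using hm), dif_neg (by simp)] at h0
      simpa using h0
    | succ m ih =>
      intro hm
      have h0 := congrFun h ⟨m+1, by omega⟩
      rw [Bmat_mulVec] at h0
      simp only [Pi.zero_apply] at h0
      rw [dif_pos (by simpa using hm), dif_pos (by simp)] at h0
      have hih := ih (by omega)
      simp only [Nat.add_sub_cancel] at h0
      have : x ⟨m, by omega⟩ = 0 := hih
      rw [this, add_zero] at h0
      exact h0
  funext i
  have := key i.val i.isLt
  simpa using this

lemma dot_self_pos {n : ℕ} (x : Fin n → ℝ) (hx : x ≠ 0) : 0 < x ⬝ᵥ x := by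
  obtain ⟨i, hi⟩ := Function.ne_iff.mp hx
  simp only [Pi.zero_apply] at hi
  unfold dotProduct
  apply Finset.sum_pos' (fun j _ => mul_self_nonneg _)
  exact ⟨i, Finset.mem_univ i, mul_self_pos.mpr hi⟩

def Emat (n : ℕ) : Matrix (Fin n) (Fin n) ℝ :=
  fun i j => if (i:ℕ) = 0 ∧ (j:ℕ) = 0 then 1 else 0

lemma Dtilde_eq (n : ℕ) : Dtilde n = Dmat n + Emat n := by
  ext i j
  simp only [Dtilde, Dmat, Emat, Matrix.add_apply]
  rcases eq_or_ne i j with h | h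
  · subst h; by_cases h0 : (i:ℕ) = 0 <;> simp [h0] <;> norm_num
  · have hne : ¬((i:ℕ) = 0 ∧ (j:ℕ) = 0) := by
      rintro ⟨a, b⟩; exact h (Fin.ext (by omega))
    simp [h, hne]

lemma quad_Emat (n : ℕ) (hn : 0 < n) (x : Fin n → ℝ) :
    x ⬝ᵥ (Emat n).mulVec x = x ⟨0, hn⟩ * x ⟨0, hn⟩ := by
  simp only [mulVec, dotProduct, Emat, ite_mul, one_mul, zero_mul]
  rw [Finset.sum_eq_single (⟨0, hn⟩ : Fin n)]
  · rw [Finset.sum_eq_single (⟨0, hn⟩ : Fin n)]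
    · simp
    · intro j _ hj
      rw [if_neg]; rintro ⟨-, hb⟩; exact hj (Fin.ext hb)
    · intro h'; exact absurd (Finset.mem_univ _) h'
  · intro i _ hi
    have : ∀ j : Fin n, (if (i:ℕ) = 0 ∧ (j:ℕ) = 0 then x j else 0) = 0 := by
      intro j; rw [if_neg]; rintro ⟨ha, -⟩; exact hi (Fin.ext ha)
    rw [Finset.sum_congr rfl (fun j _ => this j), Finset.sum_const_zero, mul_zero]
  · intro h'; exact absurd (Finset.mem_univ _) h'

lemma quad_Dtilde (n : ℕ) (hn : 0 < n) (x : Fin n → ℝ) :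
    x ⬝ᵥ (Dtilde n).mulVec x = x ⬝ᵥ (Dmat n).mulVec x + x ⟨0, hn⟩ * x ⟨0, hn⟩ := by
  rw [Dtilde_eq, Matrix.add_mulVec, dotProduct_add, quad_Emat n hn]

lemma Amat_zero_val (n : ℕ) (hn : 0 < n) (x : Fin n → ℝ) :
    (Amat n).mulVec x ⟨0, by omega⟩ = x ⟨0, hn⟩ := by
  rw [Amat_mulVec, dif_pos (by simpa using hn), dif_neg (by simp)]
  simp

lemma Amat_tail (n : ℕ) (hn : 0 < n) (x : Fin n → ℝ)
    (h : ∀ k : Fin (n+1), (k:ℕ) ≠ 0 → (Amat n).mulVec x k = 0) : x = 0 := by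
  have key : ∀ d : ℕ, ∀ hd : d < n, x ⟨n-1-d, by omega⟩ = 0 := by
    intro d
    induction d with
    | zero =>
      intro hd
      have h0 := h ⟨n, by omega⟩ (by simp; omega)
      rw [Amat_mulVec, dif_neg (by simp), dif_pos (by simpa using hn)] at h0
      simpa using h0.symm
    | succ d ih =>
      intro hd
      have hm : 0 < n - 1 - d := by omega
      have h0 := h ⟨n-1-d, by omega⟩ (by simp; omega)
      rw [Amat_mulVec, dif_pos (by simp; omega), dif_pos (by simpa using hm)] at h0
      rw [sub_eq_zero] at h0
      have hih := ih (by omega)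
      have hx : x ⟨n-1-d, by omega⟩ = 0 := by
        convert hih using 2
      rw [hx] at h0
      have : x ⟨n-1-d-1, by omega⟩ = 0 := by
        convert h0.symm using 2 <;> simp
      convert this using 2 <;> simp <;> omega
  funext i
  have hlt := i.isLt
  simp only [Pi.zero_apply]
  have heq : (⟨n-1-(n-1-i.val), by omega⟩ : Fin n) = i := Fin.ext (by simp; omega)
  rw [← heq]
  exact key (n - 1 - i.val) (by omega)

lemma Dmat_sym (n : ℕ) : (Dmat n)ᵀ = Dmat n := by
  ext i j
  simp only [transpose_apply, Dmat]
  rcases eq_or_ne i j with h | h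
  · subst h; rfl
  · rw [if_neg (Ne.symm h), if_neg h, abs_sub_comm]

lemma Dtilde_sym (n : ℕ) : (Dtilde n)ᵀ = Dtilde n := by
  ext i j
  simp only [transpose_apply, Dtilde]
  rcases eq_or_ne i j with h | h
  · subst h; rfl
  · rw [if_neg (Ne.symm h), if_neg h, abs_sub_comm]

lemma poly_neg {n : ℕ} (M : Matrix (Fin n) (Fin n) ℝ) (hsym : Mᵀ = M)
    (hneg : ∀ x : Fin n → ℝ, x ≠ 0 → x ⬝ᵥ M.mulVec x < 0)
    (γ : ℝ) (hγ : 0 < γ) (x : Fin n → ℝ) (hx : x ≠ 0) :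
    x ⬝ᵥ (γ • M - (γ ^ 2 / 12) • M ^ 2 + (γ ^ 3 / 90) • M ^ 3).mulVec x < 0 := by
  set y := M.mulVec x with hy
  have hy0 : y ≠ 0 := by
    intro h
    have := hneg x hx
    rw [← hy, h, dotProduct_zero] at this
    exact lt_irrefl 0 this
  have hswap : ∀ z, x ⬝ᵥ M.mulVec z = y ⬝ᵥ z := by
    intro z
    rw [Matrix.dotProduct_mulVec]
    congr 1
    rw [hy]
    conv_lhs => rw [← hsym]
    rw [Matrix.vecMul_transpose]
  have h2 : x ⬝ᵥ (M^2).mulVec x = y ⬝ᵥ y := by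
    rw [pow_two, ← Matrix.mulVec_mulVec, ← hy, hswap]
  have h3 : x ⬝ᵥ (M^3).mulVec x = y ⬝ᵥ M.mulVec y := by
    rw [pow_succ, ← Matrix.mulVec_mulVec, ← hy, pow_two, ← Matrix.mulVec_mulVec, hswap]
  have h1 : x ⬝ᵥ M.mulVec x = x ⬝ᵥ y := by rw [← hy]
  rw [Matrix.add_mulVec, Matrix.sub_mulVec, Matrix.smul_mulVec,
    Matrix.smul_mulVec, Matrix.smul_mulVec, dotProduct_add, dotProduct_sub,
    dotProduct_smul, dotProduct_smul, dotProduct_smul, smul_eq_mul, smul_eq_mul, smul_eq_mul,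
    h1, h2, h3]
  have hxy : x ⬝ᵥ y < 0 := by rw [← h1]; exact hneg x hx
  have hyy : 0 < y ⬝ᵥ y := dot_self_pos y hy0
  have hyMy : y ⬝ᵥ M.mulVec y < 0 := hneg y hy0
  have t1 : γ * (x ⬝ᵥ y) < 0 := mul_neg_of_pos_of_neg hγ hxy
  have t2 : 0 < γ^2/12 * (y ⬝ᵥ y) := mul_pos (by positivity) hyy
  have t3 : γ^3/90 * (y ⬝ᵥ M.mulVec y) < 0 :=
    mul_neg_of_pos_of_neg (by positivity) hyMy
  linarith

open Finset in
lemma dot_self_nonneg' {n : ℕ} (x : Fin n → ℝ) : 0 ≤ x ⬝ᵥ x :=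
  Finset.sum_nonneg (fun i _ => mul_self_nonneg (x i))

lemma Dmat_neg (n : ℕ) (x : Fin n → ℝ) (hx : x ≠ 0) :
    x ⬝ᵥ (Dmat n).mulVec x < 0 := by
  have hg : (Amat n).mulVec x ≠ 0 := fun h => hx (Amat_inj n x h)
  rw [quad_Dmat]
  have := dot_self_pos _ hg
  linarith

lemma Dtilde_neg (n : ℕ) (hn : 0 < n) (x : Fin n → ℝ) (hx : x ≠ 0) :
    x ⬝ᵥ (Dtilde n).mulVec x < 0 := by
  set g := (Amat n).mulVec x with hg
  have hq : x ⬝ᵥ (Dtilde n).mulVec x = -(g ⬝ᵥ g) + x ⟨0, hn⟩ * x ⟨0, hn⟩ := by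
    rw [quad_Dtilde n hn, quad_Dmat]
  have h0 : g 0 = x ⟨0, hn⟩ := Amat_zero_val n hn x
  have hsplit : g ⬝ᵥ g = g 0 * g 0 + ∑ k ∈ Finset.univ.erase (0 : Fin (n+1)), g k * g k := by
    rw [dotProduct]
    exact (Finset.add_sum_erase _ _ (Finset.mem_univ 0)).symm
  obtain ⟨k, hk0, hgk⟩ : ∃ k : Fin (n+1), (k:ℕ) ≠ 0 ∧ g k ≠ 0 := by
    by_contra hcon
    push_neg at hcon
    exact hx (Amat_tail n hn x hcon)
  have hpos : 0 < ∑ k ∈ Finset.univ.erase (0 : Fin (n+1)), g k * g k := by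
    apply Finset.sum_pos' (fun j _ => mul_self_nonneg _)
    refine ⟨k, Finset.mem_erase.mpr ⟨fun h => hk0 (by simp [h]), Finset.mem_univ k⟩,
      mul_self_pos.mpr hgk⟩
  rw [hq, hsplit, h0]
  linarith

/-- `𝔻_n` and `𝔻̃_n` are negative definite, with all eigenvalues in
`[−4, 0)` (and in `(−4, 0)` for `𝔻_n`); consequently for `0 < γ ≤ 1` the diffusion
discretisation `γ𝔻 − (γ²/12)𝔻² + (γ³/90)𝔻³` is negative definite (likewise for `𝔻̃`). -/
theorem stmt12 (n : ℕ) (hn : 1 ≤ n) :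
    (∀ x : Fin n → ℝ, x ≠ 0 → x ⬝ᵥ (Dmat n).mulVec x < 0) ∧
    (∀ x : Fin n → ℝ, x ≠ 0 → x ⬝ᵥ (Dtilde n).mulVec x < 0) ∧
    (∀ μ : ℝ, (∃ v : Fin n → ℝ, v ≠ 0 ∧ (Dmat n).mulVec v = μ • v) →
      -4 < μ ∧ μ < 0) ∧
    (∀ μ : ℝ, (∃ v : Fin n → ℝ, v ≠ 0 ∧ (Dtilde n).mulVec v = μ • v) →
      -4 ≤ μ ∧ μ < 0) ∧
    (∀ γ : ℝ, 0 < γ → γ ≤ 1 → ∀ x : Fin n → ℝ, x ≠ 0 →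
      x ⬝ᵥ (γ • Dmat n - (γ ^ 2 / 12) • (Dmat n) ^ 2
        + (γ ^ 3 / 90) • (Dmat n) ^ 3).mulVec x < 0 ∧
      x ⬝ᵥ (γ • Dtilde n - (γ ^ 2 / 12) • (Dtilde n) ^ 2
        + (γ ^ 3 / 90) • (Dtilde n) ^ 3).mulVec x < 0) := by
  have hn0 : 0 < n := hn
  refine ⟨fun x hx => Dmat_neg n x hx, fun x hx => Dtilde_neg n hn0 x hx, ?_, ?_, ?_⟩
  · rintro μ ⟨v, hv, heig⟩
    have hvv : 0 < v ⬝ᵥ v := dot_self_pos v hv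
    have hquad : v ⬝ᵥ (Dmat n).mulVec v = μ * (v ⬝ᵥ v) := by
      rw [heig, dotProduct_smul, smul_eq_mul]
    have hneg : μ * (v ⬝ᵥ v) < 0 := hquad ▸ Dmat_neg n v hv
    constructor
    · have hB : (Bmat n).mulVec v ≠ 0 := fun h => hv (Bmat_inj n v h)
      have h4 : v ⬝ᵥ (Dmat n).mulVec v + 4 * (v ⬝ᵥ v) > 0 := by
        rw [quad_Dmat4]
        exact dot_self_pos _ hB
      rw [hquad] at h4
      nlinarith
    · nlinarith
  · rintro μ ⟨v, hv, heig⟩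
    have hvv : 0 < v ⬝ᵥ v := dot_self_pos v hv
    have hquad : v ⬝ᵥ (Dtilde n).mulVec v = μ * (v ⬝ᵥ v) := by
      rw [heig, dotProduct_smul, smul_eq_mul]
    have hneg : μ * (v ⬝ᵥ v) < 0 := hquad ▸ Dtilde_neg n hn0 v hv
    constructor
    · have h4 : v ⬝ᵥ (Dtilde n).mulVec v + 4 * (v ⬝ᵥ v) ≥ 0 := by
        rw [quad_Dtilde n hn0]
        have hq4 := quad_Dmat4 n v
        have hBnn := dot_self_nonneg' ((Bmat n).mulVec v)
        nlinarith [mul_self_nonneg (v ⟨0, hn0⟩)]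
      rw [hquad] at h4
      nlinarith
    · nlinarith
  · intro γ hγ _ x hx
    exact ⟨poly_neg (Dmat n) (Dmat_sym n) (fun y hy => Dmat_neg n y hy) γ hγ x hx,
      poly_neg (Dtilde n) (Dtilde_sym n) (fun y hy => Dtilde_neg n hn0 y hy) γ hγ x hx⟩
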